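/- arXiv:1206.3965 — 3 statements merged into one kernel-verified Lean document; each statement's English description precedes it below -/
import Mathlib

section
/- For every k ∈ ℕ, every u ≥ 0, all reals γ, δ, and every radius 0 < r < 1, the contour integral ℐ_k satisfies ℐ_k(u,γ,δ) = (δ²/2)^k / Γ(k+1) · Φ₃(1, k+1; δ²/2, (u²/2)·(γ²δ²/2)) − exp(γ²u²/2 + δ²/2). -/
/-!
Put `a = u²γ²/2` and `b = δ²/2`. On `|p| = r < 1` the integrand
`(p - 1)⁻¹ p⁻ᵏ exp(a/p) exp(bp)` is the absolutely convergent triple Laurent series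
`-∑ pᵐ (a/p)ⁿ/n! (bp)ʲ/j! p⁻ᵏ`, which can be integrated term by term; only the terms with
`m - n + j - k = -1` survive, and such an `m ≥ 0` exists iff `j < k + n`. So
`ℐ_k = -∑_{j < k+n} aⁿ bʲ / (n! j!)`.
On the other side `bᵏ/k! Φ₃(1, k+1; b, ab) = ∑_{j,n} aⁿ b^(k+j+n) / (n! (k+j+n)!)`
is the part `j ≥ k + n` of the double series of `exp a · exp b = exp (a + b)`, so subtracting
`exp (a + b)` leaves exactly the same complementary part.
-/

open MeasureTheory Real Finset

/-- The confluent hypergeometric (Horn) function of two variables `Φ₃`. -/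
noncomputable def Phi3 (b c x y : ℝ) : ℝ :=
  ∑' j : ℕ, ∑' n : ℕ,
    (ascPochhammer ℝ j).eval b /
      ((ascPochhammer ℝ (j + n)).eval c * (j.factorial : ℝ) * (n.factorial : ℝ)) *
      x ^ j * y ^ n

/-- The contour integral `ℐ_k(u,γ,δ)` over the circle of radius `r`. -/
noncomputable def Ik (k : ℕ) (u γ δ r : ℝ) : ℂ :=
  (2 * Real.pi * Complex.I)⁻¹ *
    ∮ p in C(0, r), (p - 1)⁻¹ * p ^ (-(k : ℤ)) *
      Complex.exp ((u : ℂ) ^ 2 * (γ : ℂ) ^ 2 / (2 * p)) * Complex.exp ((δ : ℂ) ^ 2 * p / 2)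

open Complex in
theorem circleIntegral_sub_zpow (w : ℂ) {R : ℝ} (hR : 0 < R) (n : ℤ) :
    (∮ z in C(w, R), (z - w) ^ n) = if n = -1 then 2 * π * I else 0 := by
  split_ifs with hn
  · simpa [hn] using circleIntegral.integral_sub_inv_of_mem_ball (Metric.mem_ball_self hR)
  · exact circleIntegral.integral_sub_zpow_of_ne hn w w R

open Complex in
theorem circleIntegral_tsum_sub_zpow {ι : Type*} [Countable ι] {c : ι → ℂ} {e : ι → ℤ} (w : ℂ)
    {R : ℝ} (hR : 0 < R) (hs : Summable fun i => ‖c i‖ * R ^ e i) :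
    (∮ z in C(w, R), ∑' i, c i * (z - w) ^ e i) =
      2 * π * I * ∑' i, if e i = -1 then c i else 0 := by
  set F : ι → ℝ → ℂ := fun i θ => deriv (circleMap w R) θ * (c i * (circleMap w R θ - w) ^ e i)
  have hF_norm : ∀ i θ, ‖F i θ‖ = R * (‖c i‖ * R ^ e i) := fun i θ => by
    simp [F, circleMap_sub_center, deriv_circleMap, norm_zpow, abs_of_pos hR]
  have hF_int : ∀ i, IntegrableOn (F i) (Set.Icc 0 (2 * π)) := fun i => by
    refine Continuous.integrableOn_Icc ?_
    simp only [F, deriv_circleMap, circleMap_sub_center]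
    exact ((continuous_circleMap 0 R).mul continuous_const).mul (continuous_const.mul
      ((continuous_circleMap 0 R).zpow₀ _ fun θ => Or.inl (circleMap_ne_center hR.ne')))
  have hF_sum : Summable fun i => ∫ θ in Set.Icc 0 (2 * π), ‖F i θ‖ := by
    simp_rw [hF_norm, setIntegral_const]
    exact (hs.mul_left R).mul_left _
  rw [circleIntegral_def_Icc]
  simp_rw [smul_eq_mul, ← tsum_mul_left]
  rw [← integral_tsum_of_summable_integral_norm hF_int hF_sum]
  refine tsum_congr fun i => ?_
  rw [show ∫ θ in Set.Icc 0 (2 * π), F i θ = ∮ z in C(w, R), c i * (z - w) ^ e i by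
    rw [circleIntegral_def_Icc]; rfl, circleIntegral.integral_const_mul,
    circleIntegral_sub_zpow w hR]
  split_ifs <;> ring

section
variable {𝕂 : Type*} [RCLike 𝕂]

noncomputable def expMulExpTerm (x y : 𝕂) (q : ℕ × ℕ) : 𝕂 :=
  x ^ q.1 / q.1.factorial * (y ^ q.2 / q.2.factorial)

lemma summable_norm_expMulExpTerm (x y : 𝕂) : Summable fun q => ‖expMulExpTerm x y q‖ :=
  Summable.mul_norm (f := fun n : ℕ => x ^ n / (n.factorial : 𝕂))
    (g := fun n : ℕ => y ^ n / (n.factorial : 𝕂))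
    (NormedSpace.norm_expSeries_div_summable x) (NormedSpace.norm_expSeries_div_summable y)

lemma tsum_expMulExpTerm (x y : 𝕂) :
    ∑' q, expMulExpTerm x y q = NormedSpace.exp x * NormedSpace.exp y := by
  rw [NormedSpace.exp_eq_tsum_div, tsum_mul_tsum_of_summable_norm
    (NormedSpace.norm_expSeries_div_summable x) (NormedSpace.norm_expSeries_div_summable y)]
  rfl
end

noncomputable def ikIntegrand (k : ℕ) (a b p : ℂ) : ℂ :=
  (p - 1)⁻¹ * p ^ (-(k : ℤ)) * Complex.exp (a / p) * Complex.exp (b * p)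

/- The index `(m, n, j)` stands for the product of `-pᵐ` from `(p - 1)⁻¹`, `(a/p)ⁿ/n!` from
`exp (a/p)` and `(bp)ʲ/j!` from `exp (bp)`, times `p⁻ᵏ`. -/
noncomputable def laurentCoeff (a b : ℂ) (i : ℕ × ℕ × ℕ) : ℂ := -expMulExpTerm a b i.2

def laurentExponent (k : ℕ) (i : ℕ × ℕ × ℕ) : ℤ := (i.1 : ℤ) - i.2.1 + i.2.2 - k

section
variable (k : ℕ) (a b : ℂ) {p : ℂ}

lemma laurentCoeff_mul_zpow_eq (hp : p ≠ 0) (i : ℕ × ℕ × ℕ) :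
    laurentCoeff a b i * p ^ laurentExponent k i =
      -p ^ i.1 * expMulExpTerm (a / p) (b * p) i.2 * p ^ (-(k : ℤ)) := by
  obtain ⟨m, n, j⟩ := i
  simp only [laurentCoeff, laurentExponent, expMulExpTerm, zpow_sub₀ hp, zpow_add₀ hp,
    zpow_neg, zpow_natCast, div_pow, mul_pow]
  field_simp

lemma summable_norm_neg_pow (hp : ‖p‖ < 1) : Summable fun m : ℕ => ‖-p ^ m‖ := by
  simpa using summable_geometric_of_lt_one (norm_nonneg p) hp

lemma summable_norm_laurentCoeff_mul_zpow (hp₀ : p ≠ 0) (hp₁ : ‖p‖ < 1) :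
    Summable fun i => ‖laurentCoeff a b i * p ^ laurentExponent k i‖ := by
  simp_rw [laurentCoeff_mul_zpow_eq k a b hp₀]
  exact (((summable_norm_neg_pow hp₁).mul_norm (summable_norm_expMulExpTerm _ _)).mul_right _).congr
    fun i => (norm_mul _ _).symm

lemma tsum_laurentCoeff_mul_zpow (hp₀ : p ≠ 0) (hp₁ : ‖p‖ < 1) :
    ∑' i, laurentCoeff a b i * p ^ laurentExponent k i = ikIntegrand k a b p := by
  have hinv : (p - 1)⁻¹ = ∑' m : ℕ, -p ^ m := by
    rw [tsum_neg, tsum_geometric_of_norm_lt_one hp₁, ← inv_neg, neg_sub]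
  simp_rw [laurentCoeff_mul_zpow_eq k a b hp₀, tsum_mul_right]
  rw [← tsum_mul_tsum_of_summable_norm (summable_norm_neg_pow hp₁)
    (summable_norm_expMulExpTerm _ _), tsum_expMulExpTerm, ← Complex.exp_eq_exp_ℂ, ikIntegrand, hinv]
  ring
end

def residueIndices (k : ℕ) : Set (ℕ × ℕ) := {q | q.2 < k + q.1}

@[simp]
lemma mem_residueIndices {k : ℕ} {q : ℕ × ℕ} : q ∈ residueIndices k ↔ q.2 < k + q.1 := Iff.rfl

lemma tsum_ite_laurentExponent_eq_neg_one (k : ℕ) (a b : ℂ) :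
    ∑' i, (if laurentExponent k i = -1 then laurentCoeff a b i else 0) =
      -∑' q, (residueIndices k).indicator (expMulExpTerm a b) q := by
  -- outside `residueIndices k` the truncated subtraction gives `m = 0`, a term with exponent `≠ -1`
  set g : ℕ × ℕ → ℕ × ℕ × ℕ := fun q => (k + q.1 - 1 - q.2, q)
  have hg : g.Injective := fun q q' h => congrArg (·.2) h
  have hg_range : Function.support
      (fun i => if laurentExponent k i = -1 then laurentCoeff a b i else 0) ⊆ Set.range g := by
    rintro ⟨m, q⟩ hi
    have hi : (m : ℤ) - q.1 + q.2 - k = -1 := by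
      by_contra h
      exact hi (if_neg h)
    exact ⟨q, Prod.ext (by simp [g]; omega) rfl⟩
  rw [← hg.tsum_eq hg_range, ← tsum_neg]
  refine tsum_congr fun q => ?_
  by_cases hq : q.2 < k + q.1
  · rw [if_pos (by simp [g, laurentExponent]; omega)]
    simp [g, laurentCoeff, hq]
  · rw [if_neg (by simp [g, laurentExponent]; omega)]
    simp [hq]

lemma pow_div_factorial_mul_Phi3_term (k j n : ℕ) (a b : ℝ) :
    b ^ k / k.factorial * ((ascPochhammer ℝ j).eval 1 /
      ((ascPochhammer ℝ (j + n)).eval ((k : ℝ) + 1) * j.factorial * n.factorial) *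
        b ^ j * (a * b) ^ n) = expMulExpTerm a b (n, k + j + n) := by
  have hpoch : (k.factorial : ℝ) * (ascPochhammer ℝ (j + n)).eval ((k : ℝ) + 1)
      = (k + j + n).factorial := by
    rw [factorial_mul_ascPochhammer, add_assoc]
  rw [ascPochhammer_eval_one, expMulExpTerm, ← hpoch]
  field_simp
  ring

lemma pow_div_factorial_mul_Phi3 (k : ℕ) (a b : ℝ) :
    b ^ k / k.factorial * Phi3 1 (k + 1) b (a * b) =
      ∑' q, (residueIndices k)ᶜ.indicator (expMulExpTerm a b) q := by
  set g : ℕ × ℕ → ℕ × ℕ := fun p => (p.2, k + p.1 + p.2)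
  have hg : g.Injective := fun p p' h => by
    simp only [g, Prod.mk.injEq] at h
    exact Prod.ext (by omega) h.1
  have hg_range : (Function.support
      ((residueIndices k)ᶜ.indicator (expMulExpTerm a b))) ⊆ Set.range g := by
    intro q hq
    have hq : k + q.1 ≤ q.2 := by simpa using Set.support_indicator_subset hq
    exact ⟨(q.2 - k - q.1, q.1), Prod.ext rfl (by simp [g]; omega)⟩
  have hsum : Summable fun p => expMulExpTerm a b (g p) :=
    (summable_norm_expMulExpTerm a b).of_norm.comp_injective hg
  simp_rw [Phi3, ← tsum_mul_left, pow_div_factorial_mul_Phi3_term]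
  calc ∑' (j : ℕ) (n : ℕ), expMulExpTerm a b (n, k + j + n)
      = ∑' p, expMulExpTerm a b (g p) := hsum.tsum_prod.symm
    _ = ∑' p, (residueIndices k)ᶜ.indicator (expMulExpTerm a b) (g p) :=
      tsum_congr fun p => (Set.indicator_of_mem (by simp [g]) _).symm
    _ = _ := hg.tsum_eq hg_range

lemma pow_div_factorial_mul_Phi3_sub_exp (k : ℕ) (a b : ℝ) :
    b ^ k / k.factorial * Phi3 1 (k + 1) b (a * b) - Real.exp (a + b) =
      -∑' q, (residueIndices k).indicator (expMulExpTerm a b) q := by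
  set s := residueIndices k
  have hsum := (summable_norm_expMulExpTerm a b).of_norm
  have hsplit : ∑' q, expMulExpTerm a b q =
      ∑' q, s.indicator (expMulExpTerm a b) q + ∑' q, sᶜ.indicator (expMulExpTerm a b) q := by
    rw [← (hsum.indicator s).tsum_add (hsum.indicator sᶜ)]
    simp only [Set.indicator_self_add_compl_apply]
  rw [pow_div_factorial_mul_Phi3, Real.exp_add, Real.exp_eq_exp_ℝ, ← tsum_expMulExpTerm, hsplit]
  ring

lemma circleIntegral_ikIntegrand (k : ℕ) (a b : ℂ) {r : ℝ} (hr₀ : 0 < r) (hr₁ : r < 1) :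
    (∮ p in C(0, r), ikIntegrand k a b p) =
      2 * π * Complex.I * -∑' q, (residueIndices k).indicator (expMulExpTerm a b) q := by
  have hr : ‖(r : ℂ)‖ = r := by simp [hr₀.le]
  have hsum : Summable fun i => ‖laurentCoeff a b i‖ * r ^ laurentExponent k i := by
    simpa [norm_mul, norm_zpow, abs_of_pos hr₀] using
      summable_norm_laurentCoeff_mul_zpow k a b (p := r) (by exact_mod_cast hr₀.ne') (by rwa [hr])
  have hexpand : Set.EqOn (ikIntegrand k a b)
      (fun p => ∑' i, laurentCoeff a b i * (p - 0) ^ laurentExponent k i) (Metric.sphere 0 r) := by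
    intro p hp
    have hp : ‖p‖ = r := by simpa using hp
    have hp₀ : p ≠ 0 := norm_pos_iff.mp (hp ▸ hr₀)
    simp only [sub_zero, tsum_laurentCoeff_mul_zpow k a b hp₀ (hp ▸ hr₁)]
  rw [circleIntegral.integral_congr hr₀.le hexpand, circleIntegral_tsum_sub_zpow 0 hr₀ hsum,
    tsum_ite_laurentExponent_eq_neg_one]

theorem Ik_eq_Phi3_general (k : ℕ) (u γ δ : ℝ) (r : ℝ) (hr₀ : 0 < r) (hr₁ : r < 1) :
    Ik k u γ δ r =
      (((δ ^ 2 / 2) ^ k / Real.Gamma (k + 1) *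
          Phi3 1 (k + 1) (δ ^ 2 / 2) (u ^ 2 / 2 * (γ ^ 2 * δ ^ 2 / 2)) -
        Real.exp (γ ^ 2 * u ^ 2 / 2 + δ ^ 2 / 2) : ℝ) : ℂ) := by
  set a : ℝ := u ^ 2 * γ ^ 2 / 2
  set b : ℝ := δ ^ 2 / 2
  have hIk : Ik k u γ δ r = (2 * π * Complex.I)⁻¹ * ∮ p in C(0, r), ikIntegrand k a b p := by
    rw [Ik]
    congr 2 with p
    simp only [ikIntegrand, a, b]
    push_cast
    ring_nf
  rw [hIk, circleIntegral_ikIntegrand k a b hr₀ hr₁, inv_mul_cancel_left₀ Complex.two_pi_I_ne_zero,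
    Real.Gamma_nat_eq_factorial, show u ^ 2 / 2 * (γ ^ 2 * δ ^ 2 / 2) = a * b by ring,
    show γ ^ 2 * u ^ 2 / 2 + δ ^ 2 / 2 = a + b by ring, pow_div_factorial_mul_Phi3_sub_exp,
    Complex.ofReal_neg, Complex.ofReal_tsum]
  congr 1
  refine tsum_congr fun q => ?_
  by_cases hq : q.2 < k + q.1 <;> simp [hq, expMulExpTerm]

theorem Ik_eq_Phi3 (k : ℕ) (u γ δ : ℝ) (hu : 0 ≤ u) (r : ℝ) (hr₀ : 0 < r) (hr₁ : r < 1) :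
    Ik k u γ δ r =
      (((δ ^ 2 / 2) ^ k / Real.Gamma (k + 1) *
          Phi3 1 (k + 1) (δ ^ 2 / 2) (u ^ 2 / 2 * (γ ^ 2 * δ ^ 2 / 2)) -
        Real.exp (γ ^ 2 * u ^ 2 / 2 + δ ^ 2 / 2) : ℝ) : ℂ) :=
  Ik_eq_Phi3_general k u γ δ r hr₀ hr₁
end

section
/- Let b > 0, c > 0, z ≥ 0, y ≥ 0 be reals and let s > max(z, 0) (so in particular s > 0 and s > z). Then the Laplace transform identity ∫_0^∞ e^{−s t} t^{c−1} Φ₃(b, c; z t, y t) dt = Γ(c) · s^{−c} · (1 − z/s)^{−b} · e^{y/s} holds, the integrand being integrable on (0,∞). -/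
/-!
Expand `Φ₃` as a double power series with nonnegative terms. Each term integrates against
`e^{-st} t^{c-1}` to a Gamma integral `Γ(c + j + n) / s^{c+j+n} = (c)_{j+n} Γ(c) / s^{c+j+n}`,
whose Pochhammer factor cancels the one in the coefficient. What is left is `Γ(c) s^{-c}` times the
product of the binomial series `∑ (b)_j (z/s)^j / j! = (1 - z/s)^{-b}` and the exponential series
`∑ (y/s)^n / n! = e^{y/s}`. As the integrated terms are nonnegative with a finite sum, the sum and
the integral can be interchanged, and the integrand is integrable.
-/

open MeasureTheory Real Finset

open scoped Nat

theorem MeasureTheory.integrable_tsum_of_summable_integral_norm {α E ι : Type*}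
    [MeasurableSpace α] {μ : Measure α} [NormedAddCommGroup E] [CompleteSpace E] [Countable ι]
    {F : ι → α → E} (hF_int : ∀ i, Integrable (F i) μ)
    (hF_sum : Summable fun i => ∫ a, ‖F i a‖ ∂μ) :
    Integrable (fun a => ∑' i, F i a) μ := by
  have hmeas : ∀ i, AEMeasurable (fun a => ‖F i a‖ₑ) μ := fun i => (hF_int i).1.enorm
  have hlint : ∑' i, ∫⁻ a, ‖F i a‖ₑ ∂μ < ⊤ := by
    simp_rw [← ofReal_integral_norm_eq_lintegral_enorm (hF_int _),
      ← ENNReal.ofReal_tsum_of_nonneg (fun i => integral_nonneg fun a => norm_nonneg _) hF_sum]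
    exact ENNReal.ofReal_lt_top
  have hsummable : ∀ᵐ a ∂μ, Summable fun i => F i a := by
    refine (ae_lt_top' (AEMeasurable.tsum hmeas) ?_).mono fun a ha =>
      (tsum_enorm_ne_top_iff_summable_norm.1 ha.ne).of_norm
    rw [lintegral_tsum hmeas]
    exact hlint.ne
  refine ⟨aestronglyMeasurable_of_tendsto_ae Filter.atTop
    (fun s => Finset.aestronglyMeasurable_fun_sum s fun i _ => (hF_int i).1)
    (hsummable.mono fun a ha => ha.hasSum), ?_⟩
  calc ∫⁻ a, ‖∑' i, F i a‖ₑ ∂μ ≤ ∫⁻ a, ∑' i, ‖F i a‖ₑ ∂μ :=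
        lintegral_mono fun a => enorm_tsum_le_tsum_enorm
    _ = ∑' i, ∫⁻ a, ‖F i a‖ₑ ∂μ := lintegral_tsum hmeas
    _ < ⊤ := hlint

theorem Real.hasSum_ascPochhammer_div_factorial_mul_pow (b : ℝ) {x : ℝ} (hx : |x| < 1) :
    HasSum (fun j : ℕ => (ascPochhammer ℝ j).eval b / j ! * x ^ j) ((1 - x) ^ (-b)) := by
  have hball : x ∈ Metric.eball (0 : ℝ) 1 := by
    simpa [Metric.mem_eball, edist_dist, Real.dist_eq] using hx
  have h := (Real.one_div_one_sub_rpow_hasFPowerSeriesOnBall_zero b).hasSum hball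
  rw [FormalMultilinearSeries.ofScalars_apply_eq', zero_add] at h
  rw [rpow_neg (by linarith [le_abs_self x]), ← one_div]
  refine h.congr_fun fun j => ?_
  rw [← Ring.multichoose_eq, smul_eq_mul, div_mul_eq_mul_div,
    ← Polynomial.ascPochhammer_smeval_eq_eval,
    ← Ring.factorial_nsmul_multichoose_eq_ascPochhammer, nsmul_eq_mul]
  field_simp

theorem Real.Gamma_add_nat_eq_ascPochhammer_mul {c : ℝ} (hc : ∀ m : ℕ, c ≠ -m) (k : ℕ) :
    Gamma (c + k) = (ascPochhammer ℝ k).eval c * Gamma c := by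
  induction k with
  | zero => simp
  | succ k ih =>
    have hck : c + k ≠ 0 := fun h => hc k (by linarith)
    rw [Nat.cast_succ, ← add_assoc, Gamma_add_one hck, ih, ascPochhammer_succ_eval]
    ring

theorem ascPochhammer_eval_le_pow_mul_factorial {b : ℝ} (hb : 0 ≤ b) (j : ℕ) :
    (ascPochhammer ℝ j).eval b ≤ max b 1 ^ j * j ! := by
  induction j with
  | zero => simp
  | succ j ih =>
    have hstep : b + j ≤ max b 1 * (j + 1) := by
      nlinarith [le_max_left b 1, le_max_right b 1, (Nat.cast_nonneg j : (0 : ℝ) ≤ j)]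
    calc (ascPochhammer ℝ (j + 1)).eval b = (ascPochhammer ℝ j).eval b * (b + j) :=
          ascPochhammer_succ_eval j b
      _ ≤ (max b 1 ^ j * j !) * (max b 1 * (j + 1)) :=
          mul_le_mul ih hstep (by positivity) (by positivity)
      _ = max b 1 ^ (j + 1) * (j + 1)! := by push_cast [Nat.factorial_succ]; ring

theorem pow_mul_factorial_le_ascPochhammer_eval {c : ℝ} (hc : 0 ≤ c) (k : ℕ) :
    min c 1 ^ k * k ! ≤ (ascPochhammer ℝ k).eval c := by
  induction k with
  | zero => simp
  | succ k ih =>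
    have hstep : min c 1 * (k + 1) ≤ c + k := by
      nlinarith [min_le_left c 1, min_le_right c 1, (Nat.cast_nonneg k : (0 : ℝ) ≤ k)]
    calc min c 1 ^ (k + 1) * (k + 1)! = (min c 1 ^ k * k !) * (min c 1 * (k + 1)) := by
          push_cast [Nat.factorial_succ]; ring
      _ ≤ (ascPochhammer ℝ k).eval c * (c + k) :=
          mul_le_mul ih hstep (by positivity) (le_trans (by positivity) ih)
      _ = (ascPochhammer ℝ (k + 1)).eval c := (ascPochhammer_succ_eval k c).symm

noncomputable def phi3Coeff (b c : ℝ) (j n : ℕ) : ℝ :=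
  (ascPochhammer ℝ j).eval b / ((ascPochhammer ℝ (j + n)).eval c * j ! * n !)

theorem phi3Coeff_nonneg {b c : ℝ} (hb : 0 < b) (hc : 0 < c) (j n : ℕ) :
    0 ≤ phi3Coeff b c j n := by
  have := ascPochhammer_pos j b hb
  have := ascPochhammer_pos (j + n) c hc
  unfold phi3Coeff
  positivity

theorem phi3Coeff_le {b c : ℝ} (hb : 0 ≤ b) (hc : 0 < c) (j n : ℕ) :
    phi3Coeff b c j n ≤ (max b 1 / min c 1) ^ j / j ! * ((min c 1)⁻¹ ^ n / n !) := by
  have hm : 0 < min c 1 := lt_min hc one_pos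
  have hden :
      min c 1 ^ (j + n) * j ! * j ! * n ! ≤ (ascPochhammer ℝ (j + n)).eval c * j ! * n ! := by
    have hfact : (j ! : ℝ) ≤ (j + n)! := by
      exact_mod_cast Nat.factorial_le (Nat.le_add_right j n)
    have := (mul_le_mul_of_nonneg_left hfact (by positivity)).trans
      (pow_mul_factorial_le_ascPochhammer_eval hc.le (j + n))
    gcongr
  calc phi3Coeff b c j n ≤ max b 1 ^ j * j ! / (min c 1 ^ (j + n) * j ! * j ! * n !) :=
        div_le_div₀ (by positivity) (ascPochhammer_eval_le_pow_mul_factorial hb j)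
          (by positivity) hden
    _ = (max b 1 / min c 1) ^ j / j ! * ((min c 1)⁻¹ ^ n / n !) := by
        rw [pow_add, div_pow, inv_pow]; field_simp

theorem summable_phi3Coeff_mul_pow_mul_pow {b c : ℝ} (hb : 0 < b) (hc : 0 < c) (x y : ℝ) :
    Summable fun p : ℕ × ℕ => phi3Coeff b c p.1 p.2 * x ^ p.1 * y ^ p.2 := by
  have hm : 0 < min c 1 := lt_min hc one_pos
  have hmaj : Summable fun p : ℕ × ℕ =>
      (max b 1 / min c 1 * |x|) ^ p.1 / p.1 ! * ((|y| / min c 1) ^ p.2 / p.2 !) :=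
    (Real.summable_pow_div_factorial _).mul_of_nonneg (Real.summable_pow_div_factorial _)
      (fun _ => by positivity) (fun _ => by positivity)
  refine hmaj.of_norm_bounded fun ⟨j, n⟩ => ?_
  calc ‖phi3Coeff b c j n * x ^ j * y ^ n‖ = phi3Coeff b c j n * |x| ^ j * |y| ^ n := by
        rw [norm_mul, norm_mul, norm_pow, norm_pow,
          Real.norm_of_nonneg (phi3Coeff_nonneg hb hc j n), Real.norm_eq_abs, Real.norm_eq_abs]
    _ ≤ (max b 1 / min c 1) ^ j / j ! * ((min c 1)⁻¹ ^ n / n !) * |x| ^ j * |y| ^ n := by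
        gcongr; exact phi3Coeff_le hb.le hc j n
    _ = _ := by rw [mul_pow, div_eq_inv_mul |y|, mul_pow]; ring

theorem Phi3_eq_tsum_prod {b c : ℝ} (hb : 0 < b) (hc : 0 < c) (x y : ℝ) :
    Phi3 b c x y = ∑' p : ℕ × ℕ, phi3Coeff b c p.1 p.2 * x ^ p.1 * y ^ p.2 :=
  have h := summable_phi3Coeff_mul_pow_mul_pow hb hc x y
  (h.tsum_prod' fun j => h.prod_factor j).symm

theorem exp_neg_mul_mul_rpow_mul_pow_eqOn {a s : ℝ} (k : ℕ) :
    Set.EqOn (fun t => exp (-s * t) * t ^ (a - 1) * t ^ k)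
      (fun t => t ^ (a + k - 1) * exp (-(s * t))) (Set.Ioi 0) := fun t (ht : 0 < t) => by
  simp only
  rw [add_sub_right_comm, rpow_add ht, rpow_natCast, neg_mul]
  ring

theorem integrableOn_exp_neg_mul_mul_rpow_mul_pow {a s : ℝ} (ha : 0 < a) (hs : 0 < s) (k : ℕ) :
    IntegrableOn (fun t => exp (-s * t) * t ^ (a - 1) * t ^ k) (Set.Ioi 0) := by
  refine IntegrableOn.congr_fun ?_ (exp_neg_mul_mul_rpow_mul_pow_eqOn k).symm measurableSet_Ioi
  have hk : (0 : ℝ) ≤ k := k.cast_nonneg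
  simpa only [rpow_one, neg_mul] using
    integrableOn_rpow_mul_exp_neg_mul_rpow (p := 1) (by linarith) one_pos hs

theorem integral_exp_neg_mul_mul_rpow_mul_pow {a s : ℝ} (ha : 0 < a) (hs : 0 < s) (k : ℕ) :
    ∫ t in Set.Ioi 0, exp (-s * t) * t ^ (a - 1) * t ^ k = Gamma (a + k) / s ^ (a + k) := by
  rw [setIntegral_congr_fun measurableSet_Ioi (exp_neg_mul_mul_rpow_mul_pow_eqOn k),
    integral_rpow_mul_exp_neg_mul_Ioi (by positivity) hs, one_div, inv_rpow hs.le]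
  ring

section LaplaceTerm

variable {b c z y s : ℝ}

theorem laplace_phi3_term_eq (j n : ℕ) (t : ℝ) :
    exp (-s * t) * t ^ (c - 1) * (phi3Coeff b c j n * (z * t) ^ j * (y * t) ^ n) =
      phi3Coeff b c j n * z ^ j * y ^ n * (exp (-s * t) * t ^ (c - 1) * t ^ (j + n)) := by
  ring

theorem integrableOn_laplace_phi3_term (hc : 0 < c) (hs : 0 < s) (j n : ℕ) :
    IntegrableOn
      (fun t => exp (-s * t) * t ^ (c - 1) * (phi3Coeff b c j n * (z * t) ^ j * (y * t) ^ n))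
      (Set.Ioi 0) := by
  simp only [laplace_phi3_term_eq]
  exact (integrableOn_exp_neg_mul_mul_rpow_mul_pow hc hs (j + n)).const_mul _

theorem integral_laplace_phi3_term (hc : 0 < c) (hs : 0 < s) (j n : ℕ) :
    ∫ t in Set.Ioi 0,
        exp (-s * t) * t ^ (c - 1) * (phi3Coeff b c j n * (z * t) ^ j * (y * t) ^ n) =
      Gamma c * s ^ (-c) *
        ((ascPochhammer ℝ j).eval b / j ! * (z / s) ^ j * ((y / s) ^ n / n !)) := by
  simp only [laplace_phi3_term_eq]
  rw [integral_const_mul, integral_exp_neg_mul_mul_rpow_mul_pow hc hs,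
    Gamma_add_nat_eq_ascPochhammer_mul (fun m => by linarith [m.cast_nonneg (α := ℝ)]),
    rpow_add hs, rpow_natCast, rpow_neg hs.le, phi3Coeff, div_pow, div_pow]
  have := (ascPochhammer_pos (j + n) c hc).ne'
  field_simp
  ring

end LaplaceTerm

theorem laplace_transform_Phi3 (b c z y s : ℝ) (hb : 0 < b) (hc : 0 < c)
    (hz : 0 ≤ z) (hy : 0 ≤ y) (hs : max z 0 < s) :
    IntegrableOn (fun t : ℝ => Real.exp (-s * t) * t ^ (c - 1) * Phi3 b c (z * t) (y * t))
        (Set.Ioi 0) ∧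
      (∫ t in Set.Ioi (0 : ℝ), Real.exp (-s * t) * t ^ (c - 1) * Phi3 b c (z * t) (y * t)) =
        Real.Gamma c * s ^ (-c) * (1 - z / s) ^ (-b) * Real.exp (y / s) := by
  have hs0 : 0 < s := (le_max_right z 0).trans_lt hs
  have hzs : |z / s| < 1 := by
    rw [abs_of_nonneg (by positivity), div_lt_one hs0]
    exact (le_max_left z 0).trans_lt hs
  set F : ℕ × ℕ → ℝ → ℝ := fun p t =>
    exp (-s * t) * t ^ (c - 1) * (phi3Coeff b c p.1 p.2 * (z * t) ^ p.1 * (y * t) ^ p.2)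
  have hF_int (p : ℕ × ℕ) : IntegrableOn (F p) (Set.Ioi 0) :=
    integrableOn_laplace_phi3_term hc hs0 p.1 p.2
  have hF_norm (p : ℕ × ℕ) : ∫ t in Set.Ioi 0, ‖F p t‖ = ∫ t in Set.Ioi 0, F p t := by
    refine setIntegral_congr_fun measurableSet_Ioi fun t (ht : 0 < t) => norm_of_nonneg ?_
    have := phi3Coeff_nonneg hb hc p.1 p.2
    positivity
  have hF_sum : HasSum (fun p => ∫ t in Set.Ioi 0, F p t)
      (Gamma c * s ^ (-c) * (1 - z / s) ^ (-b) * exp (y / s)) := by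
    have hbinom := hasSum_ascPochhammer_div_factorial_mul_pow b hzs
    have hexp : HasSum (fun n : ℕ => (y / s) ^ n / n !) (exp (y / s)) := by
      simpa only [exp_eq_exp_ℝ] using NormedSpace.expSeries_div_hasSum_exp (y / s)
    have hprod := hbinom.mul hexp <| hbinom.summable.mul_of_nonneg hexp.summable
      (fun j => by have := ascPochhammer_pos j b hb; positivity) (fun n => by positivity)
    rw [mul_assoc]
    exact (hprod.mul_left _).congr_fun fun p => integral_laplace_phi3_term hc hs0 p.1 p.2
  have hF_summable : Summable fun p => ∫ t in Set.Ioi 0, ‖F p t‖ := by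
    simpa only [hF_norm] using hF_sum.summable
  have hrepr (t : ℝ) :
      exp (-s * t) * t ^ (c - 1) * Phi3 b c (z * t) (y * t) = ∑' p, F p t := by
    rw [Phi3_eq_tsum_prod hb hc, ← tsum_mul_left]
  simp only [hrepr]
  exact ⟨integrable_tsum_of_summable_integral_norm hF_int hF_summable,
    (integral_tsum_of_summable_integral_norm hF_int hF_summable).symm.trans hF_sum.tsum_eq⟩
end

section
/- Let i ≥ 1 and k ∈ ℕ be integers, let ρ ∈ (0,1), let b ≥ 0 and c > 0 be reals, let ρ < r < 1 and a > ρ, and define F₂(p) = (p−ρ)^{−i} p^{−k} exp(b/p) for complex p ∉ {0, ρ}. Then (1/(2πi)) ∮_{|p|=r} F₂(p) e^{c p} dp = (1/(2π)) ∫_{−∞}^{∞} F₂(a + i t) e^{c(a + i t)} dt, where the contour integral is taken counterclockwise over the circle of radius r centered at the origin and the line integral (the Bromwich integral along Re p = a) converges. -/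
open MeasureTheory Real Finset Filter

/-- The function `F₂(p) = (p-ρ)^{-i} p^{-k} exp(b/p)`. -/
noncomputable def F2 (i k : ℕ) (ρ : ℝ) (b : ℝ) (p : ℂ) : ℂ :=
  (p - (ρ : ℂ)) ^ (-(i : ℤ)) * p ^ (-(k : ℤ)) * Complex.exp ((b : ℂ) / p)

/-! Push the circle out to radius `R = ‖a + T i‖`; no singularity lies in `r ≤ ‖p‖`. The arc
`|arg p| ≤ arg (a + T i)` of that circle and the chord `[a - T i, a + T i]` both lie in a disc
inside `ρ < re p`, where the integrand has a primitive, so they carry the same integral. On the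
rest of the circle `‖F₂ p‖ = O(1/R)` and `‖exp (c p)‖ = exp (c R cos u)`, and Jordan's inequality
makes that contribution `O(1/R)`. -/

open Metric intervalIntegral ComplexConjugate Topology
open Complex (I arg)

namespace Complex

theorem ball_subset_setOf_lt_re (σ m : ℝ) : ball (m : ℂ) (m - σ) ⊆ {z | σ < z.re} := by
  intro z hz
  have h := (abs_re_le_norm (z - m)).trans_lt (mem_ball_iff_norm.1 hz)
  rw [sub_re, ofReal_re, abs_lt] at h
  show σ < z.re
  linarith [h.1]

/-- The discs `ball m (m - σ)` are tangent to `re = σ` and exhaust `σ < re` as `m → ∞`. -/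
theorem eventually_mem_ball_of_le_re {σ a : ℝ} (hσa : σ < a) (R : ℝ) :
    ∀ᶠ m : ℝ in atTop, ∀ z : ℂ, a ≤ z.re → ‖z‖ ≤ R → z ∈ ball (m : ℂ) (m - σ) := by
  filter_upwards [eventually_ge_atTop 0, eventually_gt_atTop σ,
    eventually_gt_atTop ((R ^ 2 - σ ^ 2) / (2 * (a - σ)))] with m hm0 hmσ hmR z hza hzR
  rw [mem_ball_iff_norm, ← sq_lt_sq₀ (norm_nonneg _) (by linarith), ← normSq_eq_norm_sq,
    normSq_apply]
  have hz : z.re * z.re + z.im * z.im ≤ R ^ 2 := by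
    rw [← normSq_apply, normSq_eq_norm_sq]
    exact pow_le_pow_left₀ (norm_nonneg z) hzR 2
  rw [div_lt_iff₀ (by linarith)] at hmR
  simp only [sub_re, ofReal_re, sub_im, ofReal_im, sub_zero]
  nlinarith

theorem exists_primitive_of_differentiableAt_of_lt_re {g : ℂ → ℂ} {σ a : ℝ}
    (hg : ∀ z : ℂ, σ < z.re → DifferentiableAt ℂ g z) (hσa : σ < a) (R : ℝ) :
    ∃ G : ℂ → ℂ, ∀ z : ℂ, a ≤ z.re → ‖z‖ ≤ R → HasDerivAt G (g z) z := by
  obtain ⟨m, hm⟩ := (eventually_mem_ball_of_le_re hσa R).exists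
  have hball : DifferentiableOn ℂ g (ball (m : ℂ) (m - σ)) := fun z hz ↦
    (hg z (ball_subset_setOf_lt_re σ m hz)).differentiableWithinAt
  obtain ⟨G, hG⟩ := hball.isExactOn_ball
  exact ⟨G, fun z hza hzR ↦ hG z (hm z hza hzR)⟩

end Complex

theorem integral_smul_comp_eq_sub_of_hasDerivAt {G g : ℂ → ℂ} {γ γ' : ℝ → ℂ} {s t : ℝ}
    (hγ : ∀ u ∈ Set.uIcc s t, HasDerivAt γ (γ' u) u)
    (hG : ∀ u ∈ Set.uIcc s t, HasDerivAt G (g (γ u)) (γ u))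
    (hint : IntervalIntegrable (fun u ↦ γ' u • g (γ u)) volume s t) :
    ∫ u in s..t, γ' u • g (γ u) = G (γ t) - G (γ s) := by
  refine integral_eq_sub_of_hasDerivAt (f := fun u ↦ G (γ u)) (fun u hu ↦ ?_) hint
  rw [smul_eq_mul, mul_comm]
  exact (hG u hu).comp u (hγ u hu)

theorem circleIntegral_eq_integral_neg_pi_pi {E : Type*} [NormedAddCommGroup E]
    [NormedSpace ℂ E] (f : ℂ → E) (c : ℂ) (R : ℝ) :
    (∮ z in C(c, R), f z) = ∫ u in -π..π, deriv (circleMap c R) u • f (circleMap c R u) := by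
  have hper : Function.Periodic (fun u ↦ deriv (circleMap c R) u • f (circleMap c R u))
      (2 * π) := fun u ↦ by
    simp only [deriv_circleMap, periodic_circleMap c R u, periodic_circleMap 0 R u]
  rw [circleIntegral, ← zero_add (2 * π), ← hper.intervalIntegral_add_eq (-π) 0]
  ring_nf

theorem pi_div_two_sub_le_mul_cos {θ : ℝ} (h0 : 0 ≤ θ) (h1 : θ ≤ π / 2) :
    π / 2 - θ ≤ π / 2 * cos θ := by
  have h := mul_le_sin (x := π / 2 - θ) (by linarith) (by linarith)
  rw [sin_pi_div_two_sub] at h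
  have hπ := pi_pos
  rw [div_mul_eq_mul_div, div_le_iff₀ hπ] at h
  nlinarith

theorem integral_exp_mul_cos_pi_div_two_pi_le {κ : ℝ} (hκ : 0 < κ) :
    ∫ u in (π / 2)..π, exp (κ * cos u) ≤ π / (2 * κ) := by
  have hπ := pi_pos
  have hcos : ∀ u ∈ Set.Icc (π / 2) π, exp (κ * cos u) ≤ exp (κ - 2 * κ / π * u) := by
    intro u hu
    have h := mul_le_sin (x := u - π / 2) (by linarith [hu.1]) (by linarith [hu.2])
    rw [sin_sub_pi_div_two] at h
    gcongr
    field_simp at h ⊢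
    nlinarith
  calc ∫ u in (π / 2)..π, exp (κ * cos u)
      ≤ ∫ u in (π / 2)..π, exp (κ - 2 * κ / π * u) :=
        integral_mono_on (by linarith) (Continuous.intervalIntegrable (by fun_prop) _ _)
          (Continuous.intervalIntegrable (by fun_prop) _ _) hcos
    _ = π / (2 * κ) * (1 - exp (-κ)) := by
        rw [integral_comp_sub_mul (fun x ↦ exp x) (by positivity), integral_exp]
        ring_nf
        field_simp
        norm_num
    _ ≤ π / (2 * κ) := mul_le_of_le_one_right (by positivity) (by linarith [exp_pos (-κ)])

theorem integral_exp_mul_cos_le {κ θ₀ : ℝ} (hκ : 0 < κ) (h0 : 0 ≤ θ₀) (h1 : θ₀ ≤ π / 2) :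
    ∫ u in θ₀..π, exp (κ * cos u) ≤ π / 2 * (exp (κ * cos θ₀) * cos θ₀ + 1 / κ) := by
  have hint : ∀ s t, IntervalIntegrable (fun u ↦ exp (κ * cos u)) volume s t :=
    fun s t ↦ Continuous.intervalIntegrable (by fun_prop) s t
  have hnear : ∫ u in θ₀..(π / 2), exp (κ * cos u) ≤ (π / 2 - θ₀) * exp (κ * cos θ₀) := by
    calc ∫ u in θ₀..(π / 2), exp (κ * cos u)
        ≤ ∫ _ in θ₀..(π / 2), exp (κ * cos θ₀) :=
          integral_mono_on h1 (hint _ _) intervalIntegrable_const fun u hu ↦ by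
            gcongr
            exact cos_le_cos_of_nonneg_of_le_pi h0 (by linarith [hu.2, pi_pos]) hu.1
      _ = (π / 2 - θ₀) * exp (κ * cos θ₀) := by simp
  have hfar := integral_exp_mul_cos_pi_div_two_pi_le hκ
  have hlen := pi_div_two_sub_le_mul_cos h0 h1
  rw [← integral_add_adjacent_intervals (hint θ₀ (π / 2)) (hint (π / 2) π)]
  have : π / (2 * κ) = π / 2 * (1 / κ) := by ring
  nlinarith [exp_pos (κ * cos θ₀)]

theorem norm_integral_le_of_norm_le_exp_mul_cos {E : Type*} [NormedAddCommGroup E]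
    [NormedSpace ℝ E] {P : ℝ → E} {D κ θ₀ : ℝ} (hκ : 0 < κ) (h0 : 0 ≤ θ₀) (h1 : θ₀ ≤ π / 2)
    (hP : IntervalIntegrable P volume θ₀ π)
    (hbound : ∀ u ∈ Set.Icc θ₀ π, ‖P u‖ ≤ D * exp (κ * cos u)) :
    ‖∫ u in θ₀..π, P u‖ ≤ D * (π / 2 * (exp (κ * cos θ₀) * cos θ₀ + 1 / κ)) := by
  have hθπ : θ₀ ≤ π := h1.trans (by linarith [pi_pos])
  have hD : 0 ≤ D :=
    nonneg_of_mul_nonneg_left ((norm_nonneg _).trans (hbound π ⟨hθπ, le_rfl⟩)) (exp_pos _)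
  calc ‖∫ u in θ₀..π, P u‖ ≤ ∫ u in θ₀..π, ‖P u‖ := norm_integral_le_integral_norm hθπ
    _ ≤ ∫ u in θ₀..π, D * exp (κ * cos u) :=
        integral_mono_on hθπ hP.norm (Continuous.intervalIntegrable (by fun_prop) _ _) hbound
    _ = D * ∫ u in θ₀..π, exp (κ * cos u) := integral_const_mul _ _
    _ ≤ _ := mul_le_mul_of_nonneg_left (integral_exp_mul_cos_le hκ h0 h1) hD

namespace Complex

theorem circleMap_norm_arg (w : ℂ) : circleMap 0 ‖w‖ (arg w) = w := by
  rw [circleMap_zero, norm_mul_exp_arg_mul_I]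

theorem circleMap_norm_neg_arg (w : ℂ) : circleMap 0 ‖w‖ (-arg w) = conj w := by
  apply Complex.ext <;>
    simp [circleMap_zero_re, circleMap_zero_im, norm_mul_cos_arg, norm_mul_sin_arg]

theorem re_le_re_circleMap_norm {w : ℂ} {u : ℝ} (hu : |u| ≤ arg w) :
    w.re ≤ (circleMap 0 ‖w‖ u).re := by
  rw [circleMap_zero_re, ← norm_mul_cos_arg, ← cos_abs u]
  exact mul_le_mul_of_nonneg_left
    (cos_le_cos_of_nonneg_of_le_pi (abs_nonneg u) (arg_le_pi w) hu) (norm_nonneg w)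

theorem norm_re_add_mul_I_le {w : ℂ} {t : ℝ} (ht : |t| ≤ |w.im|) :
    ‖(w.re + t * I : ℂ)‖ ≤ ‖w‖ := by
  rw [norm_add_mul_I, norm_eq_sqrt_sq_add_sq w]
  exact sqrt_le_sqrt (add_le_add_right (sq_le_sq.2 ht) _)

end Complex

open Complex in
theorem integral_arc_eq_I_smul_integral_vertical {g : ℂ → ℂ} {σ : ℝ} {w : ℂ}
    (hg : ∀ z : ℂ, σ < z.re → DifferentiableAt ℂ g z) (hσ : σ < w.re) (him : 0 ≤ w.im) :
    ∫ u in -arg w..arg w, deriv (circleMap 0 ‖w‖) u • g (circleMap 0 ‖w‖ u) =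
      I • ∫ t in -w.im..w.im, g (w.re + t * I) := by
  obtain ⟨G, hG⟩ := exists_primitive_of_differentiableAt_of_lt_re hg hσ ‖w‖
  have hcont : ∀ z : ℂ, w.re ≤ z.re → ContinuousAt g z := fun z hz ↦
    (hg z (hσ.trans_le hz)).continuousAt
  have harc : ∀ u ∈ Set.uIcc (-arg w) (arg w), w.re ≤ (circleMap 0 ‖w‖ u).re := by
    intro u hu
    rw [Set.uIcc_of_le (by linarith [arg_nonneg_iff.2 him])] at hu
    exact re_le_re_circleMap_norm (abs_le.2 hu)
  have hseg : ∀ t ∈ Set.uIcc (-w.im) w.im, ‖(w.re + t * I : ℂ)‖ ≤ ‖w‖ := by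
    intro t ht
    rw [Set.uIcc_of_le (by linarith)] at ht
    exact norm_re_add_mul_I_le (by rw [abs_of_nonneg him]; exact abs_le.2 ht)
  have hline : ∀ t : ℝ, HasDerivAt (fun t : ℝ ↦ (w.re + t * I : ℂ)) I t := fun t ↦ by
    simpa using (((hasDerivAt_id (t : ℂ)).mul_const I).const_add (w.re : ℂ)).comp_ofReal
  have h_arc : ∫ u in -arg w..arg w, deriv (circleMap 0 ‖w‖) u • g (circleMap 0 ‖w‖ u) =
      G w - G (conj w) := by
    rw [integral_smul_comp_eq_sub_of_hasDerivAt
      (fun u _ ↦ (differentiable_circleMap 0 ‖w‖ u).hasDerivAt)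
      (fun u hu ↦ hG _ (harc u hu) (by simp)), circleMap_norm_arg, circleMap_norm_neg_arg]
    refine ContinuousOn.intervalIntegrable fun u hu ↦ ContinuousAt.continuousWithinAt ?_
    simp only [deriv_circleMap]
    exact (by fun_prop : Continuous fun u ↦ circleMap 0 ‖w‖ u * I).continuousAt.smul
      ((hcont _ (harc u hu)).comp (continuous_circleMap 0 _).continuousAt)
  have h_seg : ∫ t in -w.im..w.im, I • g (w.re + t * I) = G w - G (conj w) := by
    rw [integral_smul_comp_eq_sub_of_hasDerivAt (fun t _ ↦ hline t)
      (fun t ht ↦ hG _ (by simp) (hseg t ht))]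
    · have hconj : (w.re + (-w.im : ℝ) * I : ℂ) = conj w := by apply Complex.ext <;> simp
      rw [re_add_im, hconj]
    · refine ContinuousOn.intervalIntegrable fun t _ ↦ ContinuousAt.continuousWithinAt ?_
      exact ((hcont _ (by simp)).comp (hline t).continuousAt).const_smul I
  rw [h_arc, ← h_seg, intervalIntegral.integral_smul]

theorem norm_deriv_circleMap_smul_le {g : ℂ → ℂ} {R c D : ℝ} (hR : 0 ≤ R)
    (hg : ∀ z : ℂ, ‖z‖ = R → ‖z‖ * ‖g z‖ ≤ D * exp (c * z.re)) (u : ℝ) :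
    ‖deriv (circleMap 0 R) u • g (circleMap 0 R u)‖ ≤ D * exp (c * R * cos u) := by
  rw [deriv_circleMap, norm_smul, norm_mul, Complex.norm_I, mul_one, mul_assoc c,
    ← circleMap_zero_re]
  exact hg _ (by rw [norm_circleMap_zero, abs_of_nonneg hR])

theorem norm_circleIntegral_sub_I_smul_integral_vertical_le {g : ℂ → ℂ} {r σ c D : ℝ} {w : ℂ}
    (hr : 0 < r) (hrw : r ≤ ‖w‖) (hσ : σ < w.re) (hre : 0 ≤ w.re) (him : 0 ≤ w.im)
    (hc : 0 < c) (hg : ∀ z : ℂ, r ≤ ‖z‖ ∨ σ < z.re → DifferentiableAt ℂ g z)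
    (hbound : ∀ z : ℂ, ‖z‖ = ‖w‖ → ‖z‖ * ‖g z‖ ≤ D * exp (c * z.re)) :
    ‖(∮ z in C(0, r), g z) - I • ∫ t in -w.im..w.im, g (w.re + t * I)‖ ≤
      D * π * (exp (c * w.re) * w.re + 1 / c) / ‖w‖ := by
  set R := ‖w‖
  set θ := arg w
  set f : ℝ → ℂ := fun u ↦ deriv (circleMap 0 R) u • g (circleMap 0 R u) with hf
  have hR : 0 < R := hr.trans_le hrw
  have hθ0 : 0 ≤ θ := Complex.arg_nonneg_iff.2 him
  have hθ1 : θ ≤ π / 2 := (le_abs_self _).trans (Complex.abs_arg_le_pi_div_two_iff.2 hre)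
  have hgc : ∀ z : ℂ, r ≤ ‖z‖ → ContinuousAt g z := fun z hz ↦ (hg z (Or.inl hz)).continuousAt
  have hfc : Continuous f := by
    simp only [hf, deriv_circleMap]
    refine (by fun_prop : Continuous fun u ↦ circleMap 0 R u * I).smul
      (continuous_iff_continuousAt.2 fun u ↦ ?_)
    refine (hgc _ ?_).comp (continuous_circleMap 0 R).continuousAt
    rwa [norm_circleMap_zero, abs_of_pos hR]
  have hannulus : (∮ z in C(0, R), g z) = ∮ z in C(0, r), g z := by
    refine Complex.circleIntegral_eq_of_differentiable_on_annulus_off_countable hr hrw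
      Set.countable_empty (fun z hz ↦ (hgc z ?_).continuousWithinAt) fun z hz ↦ hg z (Or.inl ?_)
    · simpa using hz.2
    · simpa using (le_of_lt (by simpa using hz.1.2))
  have hsplit : (∮ z in C(0, R), g z) =
      (∫ u in -π..-θ, f u) + (∫ u in -θ..θ, f u) + ∫ u in θ..π, f u := by
    rw [circleIntegral_eq_integral_neg_pi_pi, integral_add_adjacent_intervals,
      integral_add_adjacent_intervals] <;> exact hfc.intervalIntegrable _ _
  have htail := norm_integral_le_of_norm_le_exp_mul_cos (mul_pos hc hR) hθ0 hθ1
    (hfc.intervalIntegrable θ π) fun u _ ↦ norm_deriv_circleMap_smul_le hR.le hbound u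
  have htail' : ‖∫ u in -π..-θ, f u‖ ≤
      D * (π / 2 * (exp (c * R * cos θ) * cos θ + 1 / (c * R))) := by
    rw [← integral_comp_neg]
    refine norm_integral_le_of_norm_le_exp_mul_cos (mul_pos hc hR) hθ0 hθ1
      ((hfc.comp continuous_neg).intervalIntegrable θ π) fun u _ ↦ ?_
    simpa only [cos_neg] using norm_deriv_circleMap_smul_le hR.le hbound (-u)
  have hcos : cos θ = w.re / R :=
    eq_div_of_mul_eq hR.ne' (by rw [mul_comm]; exact Complex.norm_mul_cos_arg w)
  rw [← hannulus, hsplit, integral_arc_eq_I_smul_integral_vertical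
    (fun z hz ↦ hg z (Or.inr hz)) hσ him]
  calc _ = ‖(∫ u in -π..-θ, f u) + ∫ u in θ..π, f u‖ := by congr 1; abel
    _ ≤ ‖∫ u in -π..-θ, f u‖ + ‖∫ u in θ..π, f u‖ := norm_add_le _ _
    _ ≤ 2 * (D * (π / 2 * (exp (c * R * cos θ) * cos θ + 1 / (c * R)))) := by linarith
    _ = D * π * (exp (c * w.re) * w.re + 1 / c) / R := by
        rw [hcos]
        field_simp

theorem tendsto_I_smul_integral_vertical {F : ℂ → ℂ} {r σ a c D R₀ : ℝ}
    (hr : 0 < r) (hσa : σ < a) (ha : 0 ≤ a) (hc : 0 < c)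
    (hF : ∀ z : ℂ, r ≤ ‖z‖ ∨ σ < z.re → DifferentiableAt ℂ F z)
    (hdecay : ∀ z : ℂ, R₀ ≤ ‖z‖ → ‖z‖ * ‖F z‖ ≤ D) :
    Tendsto (fun T : ℝ ↦ I • ∫ t in -T..T, F (a + t * I) * Complex.exp (c * (a + t * I)))
      atTop (𝓝 (∮ z in C(0, r), F z * Complex.exp (c * z))) := by
  set g : ℂ → ℂ := fun z ↦ F z * Complex.exp (c * z)
  have hg : ∀ z : ℂ, r ≤ ‖z‖ ∨ σ < z.re → DifferentiableAt ℂ g z := fun z hz ↦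
    (hF z hz).mul (by fun_prop)
  have hbound : ∀ z : ℂ, R₀ ≤ ‖z‖ → ‖z‖ * ‖g z‖ ≤ D * exp (c * z.re) := fun z hz ↦ by
    rw [norm_mul, Complex.norm_exp, ← mul_assoc, Complex.re_ofReal_mul]
    exact mul_le_mul_of_nonneg_right (hdecay z hz) (exp_pos _).le
  set K := D * π * (exp (c * a) * a + 1 / c)
  have hest : ∀ᶠ T in atTop,
      ‖(∮ z in C(0, r), g z) - I • ∫ t in -T..T, g (a + t * I)‖ ≤ |K| / T := by
    filter_upwards [eventually_ge_atTop (max r R₀), eventually_gt_atTop 0] with T hT hT0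
    set w : ℂ := a + T * I
    have hwre : w.re = a := by simp [w]
    have hwim : w.im = T := by simp [w]
    have hTw : T ≤ ‖w‖ := by simpa [w, abs_of_pos hT0] using Complex.abs_im_le_norm w
    have hw := norm_circleIntegral_sub_I_smul_integral_vertical_le (w := w) hr
      ((le_max_left _ _).trans (hT.trans hTw)) (hwre ▸ hσa) (hwre ▸ ha) (hwim ▸ hT0.le)
      hc hg fun z hz ↦ hbound z (hz ▸ (le_max_right _ _).trans (hT.trans hTw))
    rw [hwre, hwim] at hw
    calc _ ≤ K / ‖w‖ := hw
      _ ≤ |K| / ‖w‖ := by gcongr; exact le_abs_self K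
      _ ≤ |K| / T := div_le_div_of_nonneg_left (abs_nonneg K) hT0 hTw
  rw [tendsto_iff_norm_sub_tendsto_zero]
  refine squeeze_zero' (Eventually.of_forall fun _ ↦ norm_nonneg _) ?_
    ((tendsto_const_nhds (x := |K|)).div_atTop tendsto_id)
  filter_upwards [hest] with T hT
  rwa [norm_sub_rev]

theorem differentiableAt_F2 (i k : ℕ) (ρ b : ℝ) {z : ℂ} (h0 : z ≠ 0) (hρ : z ≠ ρ) :
    DifferentiableAt ℂ (F2 i k ρ b) z := by
  have h0' : z ≠ 0 ∨ 0 ≤ -(k : ℤ) := Or.inl h0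
  have hρ' : z - ρ ≠ 0 ∨ 0 ≤ -(i : ℤ) := Or.inl (sub_ne_zero.2 hρ)
  unfold F2
  fun_prop (disch := assumption)

theorem norm_mul_norm_F2_le {i : ℕ} (hi : 1 ≤ i) (k : ℕ) (ρ b : ℝ) {z : ℂ}
    (hz : 2 * |ρ| + 2 ≤ ‖z‖) : ‖z‖ * ‖F2 i k ρ b z‖ ≤ 2 * exp |b| := by
  have hz1 : 1 ≤ ‖z‖ := by linarith [abs_nonneg ρ]
  have hzρ : ‖z‖ - |ρ| ≤ ‖z - ρ‖ := by
    simpa using norm_sub_norm_le z ρ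
  have hzρ1 : 1 ≤ ‖z - ρ‖ := by linarith
  have h1 : ‖(z - ρ) ^ (-(i : ℤ))‖ ≤ ‖z - ρ‖⁻¹ := by
    rw [norm_zpow, zpow_neg, zpow_natCast]
    exact inv_anti₀ (by linarith) (le_self_pow₀ hzρ1 (by omega))
  have h2 : ‖z ^ (-(k : ℤ))‖ ≤ 1 := by
    rw [norm_zpow, zpow_neg, zpow_natCast]
    exact inv_le_one_of_one_le₀ (one_le_pow₀ hz1)
  have h3 : ‖Complex.exp (b / z)‖ ≤ exp |b| := by
    rw [Complex.norm_exp]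
    refine exp_le_exp.2 ((Complex.re_le_norm _).trans ?_)
    rw [norm_div, Complex.norm_real, norm_eq_abs]
    exact div_le_self (abs_nonneg b) hz1
  have h4 : ‖z‖ * ‖z - ρ‖⁻¹ ≤ 2 := by
    rw [mul_inv_le_iff₀ (by linarith)]
    linarith
  calc ‖z‖ * ‖F2 i k ρ b z‖
      = ‖z‖ * (‖(z - ρ) ^ (-(i : ℤ))‖ * ‖z ^ (-(k : ℤ))‖ * ‖Complex.exp (b / z)‖) := by
        rw [F2, norm_mul, norm_mul]
    _ ≤ ‖z‖ * (‖z - ρ‖⁻¹ * 1 * exp |b|) := by gcongr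
    _ = ‖z‖ * ‖z - ρ‖⁻¹ * exp |b| := by ring
    _ ≤ 2 * exp |b| := by gcongr

theorem contour_eq_bromwich_general (i k : ℕ) (hi : 1 ≤ i) (ρ : ℝ) (hρ : ρ ∈ Set.Ioo (0 : ℝ) 1)
    (b c : ℝ) (hc : 0 < c)
    (r a : ℝ) (hr₀ : ρ < r) (ha : ρ < a) :
    Tendsto
      (fun T : ℝ => (1 / (2 * (Real.pi : ℂ))) *
        ∫ t in (-T)..T, F2 i k ρ b ((a : ℂ) + t * Complex.I) *
          Complex.exp ((c : ℂ) * ((a : ℂ) + t * Complex.I)))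
      atTop
      (nhds ((2 * Real.pi * Complex.I)⁻¹ *
          ∮ p in C(0, r), F2 i k ρ b p * Complex.exp ((c : ℂ) * p))) := by
  have hρ0 : 0 < ρ := hρ.1
  have hF : ∀ z : ℂ, r ≤ ‖z‖ ∨ ρ < z.re → DifferentiableAt ℂ (F2 i k ρ b) z := by
    intro z hz
    refine differentiableAt_F2 i k ρ b ?_ ?_ <;> rintro rfl <;>
      simp only [norm_zero, Complex.zero_re, Complex.norm_real, norm_eq_abs, abs_of_pos hρ0,
        Complex.ofReal_re] at hz <;> rcases hz with hz | hz <;> linarith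
  have hlim := (tendsto_I_smul_integral_vertical (hρ0.trans hr₀) ha (hρ0.trans ha).le hc hF
    fun z hz ↦ norm_mul_norm_F2_le hi k ρ b hz).const_mul (2 * π * I)⁻¹
  refine hlim.congr fun T ↦ ?_
  rw [smul_eq_mul, ← mul_assoc]
  congr 1
  field_simp

theorem contour_eq_bromwich (i k : ℕ) (hi : 1 ≤ i) (ρ : ℝ) (hρ : ρ ∈ Set.Ioo (0 : ℝ) 1)
    (b c : ℝ) (hb : 0 ≤ b) (hc : 0 < c)
    (r a : ℝ) (hr₀ : ρ < r) (hr₁ : r < 1) (ha : ρ < a) :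
    Tendsto
      (fun T : ℝ => (1 / (2 * (Real.pi : ℂ))) *
        ∫ t in (-T)..T, F2 i k ρ b ((a : ℂ) + t * Complex.I) *
          Complex.exp ((c : ℂ) * ((a : ℂ) + t * Complex.I)))
      atTop
      (nhds ((2 * Real.pi * Complex.I)⁻¹ *
          ∮ p in C(0, r), F2 i k ρ b p * Complex.exp ((c : ℂ) * p))) :=
  contour_eq_bromwich_general i k hi ρ hρ b c hc r a hr₀ ha
end
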